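/- Let α ≥ 2, β ≥ 1 and N ≥ 2 be integers with gcd(β, N) = 1, and in ℂ[[x_1,x_2,y_1,y_2]] let I_Δ be the ideal generated by x_1 − y_1, x_1^α x_2^β − y_1^α y_2^β and x_2^N − y_2^N. Then for all integers a, b with 0 < a < α and N not dividing b, the element x_1^a x_2^b − y_1^a y_2^b is NOT integral over I_Δ. -/

import Mathlib

/-!
Pull an integral equation back along the arc `t ↦ (t ^ (b + 1), t, t ^ (b + 1), θ t)`, with `θ` a
primitive `N`-th root of unity. The arc kills `x₁ - y₁` and `x₂ ^ N - y₂ ^ N` and sends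
`x₁ ^ α x₂ ^ β - y₁ ^ α y₂ ^ β` to a multiple of `t ^ ((b + 1) α)`, so it maps `I_Δ` into
`(t ^ (d + 1))` with `d = (b + 1) a + b`, while `x₁ ^ a x₂ ^ b - y₁ ^ a y₂ ^ b` goes to
`(1 - θ ^ b) t ^ d` and `θ ^ b ≠ 1`. An element of order exactly `d` is not integral over
`(t ^ (d + 1))`: in an equation of degree `m`, the coefficient of `t ^ (d m)` comes from the
leading term alone.
-/

/-- An element `f` of a commutative ring is *integral over the ideal* `I` if it satisfies an
equation `f ^ m + a 1 * f ^ (m-1) + ⋯ + a (m-1) * f + a m = 0` with `a j ∈ I ^ j`. -/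
def IsIntegralOverIdeal {R : Type*} [CommRing R] (I : Ideal R) (f : R) : Prop :=
  ∃ m : ℕ, 0 < m ∧ ∃ a : ℕ → R, (∀ j, 1 ≤ j → j ≤ m → a j ∈ I ^ j) ∧
    f ^ m + ∑ j ∈ Finset.Icc 1 m, a j * f ^ (m - j) = 0

namespace IsIntegralOverIdeal

variable {R S : Type*} [CommRing R] [CommRing S] {I J : Ideal R} {f : R}

theorem mono (h : IsIntegralOverIdeal I f) (hIJ : I ≤ J) : IsIntegralOverIdeal J f := by
  obtain ⟨m, hm, a, ha, heq⟩ := h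
  exact ⟨m, hm, a, fun j hj hjm => Ideal.pow_right_mono hIJ j (ha j hj hjm), heq⟩

theorem map (h : IsIntegralOverIdeal I f) (φ : R →+* S) :
    IsIntegralOverIdeal (I.map φ) (φ f) := by
  obtain ⟨m, hm, a, ha, heq⟩ := h
  refine ⟨m, hm, fun j => φ (a j), fun j hj hjm => ?_, ?_⟩
  · rw [← Ideal.map_pow]
    exact Ideal.mem_map_of_mem φ (ha j hj hjm)
  · simpa only [map_add, map_pow, map_sum, map_mul, map_zero] using congrArg φ heq

end IsIntegralOverIdeal

open PowerSeries in
theorem not_isIntegralOverIdeal_X_pow_mul {K : Type*} [CommRing K] [NoZeroDivisors K]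
    (d : ℕ) {u : K⟦X⟧} (hu : constantCoeff u ≠ 0) :
    ¬ IsIntegralOverIdeal (Ideal.span {X ^ (d + 1)}) (X ^ d * u) := by
  rintro ⟨m, hm, a, ha, heq⟩
  have hlead : coeff (d * m) ((X ^ d * u) ^ m) = constantCoeff u ^ m := by
    rw [mul_pow, ← pow_mul, coeff_X_pow_mul', if_pos le_rfl, Nat.sub_self,
      coeff_zero_eq_constantCoeff, map_pow]
  have hrest : ∀ j ∈ Finset.Icc 1 m, coeff (d * m) (a j * (X ^ d * u) ^ (m - j)) = 0 := by
    intro j hj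
    obtain ⟨hj1, hjm⟩ := Finset.mem_Icc.mp hj
    obtain ⟨v, hv⟩ := Ideal.mem_span_singleton'.mp <|
      (Ideal.span_singleton_pow (X ^ (d + 1) : K⟦X⟧) j) ▸ ha j hj1 hjm
    have hfactor : a j * (X ^ d * u) ^ (m - j) = X ^ (d * m + j) * (v * u ^ (m - j)) := by
      rw [← hv, ← pow_mul, mul_pow, ← pow_mul,
        show d * m + j = (d + 1) * j + d * (m - j) by
          rw [Nat.mul_sub, add_mul, one_mul]; have := Nat.mul_le_mul_left d hjm; omega]
      ring
    rw [hfactor, coeff_X_pow_mul', if_neg (by omega)]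
  have hcoeff := congrArg (coeff (d * m)) heq
  rw [map_add, map_sum, Finset.sum_eq_zero hrest, hlead, add_zero, map_zero] at hcoeff
  exact hu ((pow_eq_zero_iff hm.ne').mp hcoeff)

section TwistedArc

open PowerSeries

variable {K : Type*} [CommRing K] (θ : K) (k : ℕ)

theorem hasSubst_twistedArc :
    MvPowerSeries.HasSubst ![(X : K⟦X⟧) ^ (k + 1), X, X ^ (k + 1), C θ * X] :=
  MvPowerSeries.hasSubst_of_constantCoeff_zero fun i => by fin_cases i <;> simp [PowerSeries.X]

noncomputable def twistedArc : MvPowerSeries (Fin 4) K →ₐ[K] K⟦X⟧ :=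
  MvPowerSeries.substAlgHom (hasSubst_twistedArc θ k)

theorem twistedArc_binomial (a c : ℕ) :
    twistedArc θ k (MvPowerSeries.X 0 ^ a * MvPowerSeries.X 1 ^ c -
        MvPowerSeries.X 2 ^ a * MvPowerSeries.X 3 ^ c) =
      X ^ ((k + 1) * a + c) * C (1 - θ ^ c) := by
  simp only [twistedArc, map_sub, map_mul, map_pow, MvPowerSeries.substAlgHom_X]
  simp only [Matrix.cons_val, mul_pow, ← map_pow, map_one, pow_add, pow_mul]
  ring

theorem map_twistedArc_span_le {α β N a : ℕ} (haα : a < α) (hθ : θ ^ N = 1) :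
    (Ideal.span {MvPowerSeries.X 0 - MvPowerSeries.X 2,
        MvPowerSeries.X 0 ^ α * MvPowerSeries.X 1 ^ β -
          MvPowerSeries.X 2 ^ α * MvPowerSeries.X 3 ^ β,
        MvPowerSeries.X 1 ^ N - MvPowerSeries.X 3 ^ N}).map (twistedArc θ k) ≤
      Ideal.span {X ^ ((k + 1) * a + k + 1)} := by
  rw [Ideal.map_span, Ideal.span_le]
  rintro _ ⟨g, hg, rfl⟩
  simp only [Set.mem_insert_iff, Set.mem_singleton_iff] at hg
  rcases hg with rfl | rfl | rfl
  · have h := twistedArc_binomial θ k 1 0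
    simp only [pow_one, pow_zero, mul_one, sub_self, map_zero, mul_zero] at h
    simp [h]
  · rw [twistedArc_binomial, SetLike.mem_coe, Ideal.mem_span_singleton]
    exact (pow_dvd_pow X (by nlinarith)).mul_right _
  · have h := twistedArc_binomial θ k 0 N
    simp only [pow_zero, one_mul, hθ, sub_self, map_zero, mul_zero] at h
    simp [h]

end TwistedArc

open MvPowerSeries in
theorem mixed_power_not_integral_general (α β N : ℕ)
    (hN : 2 ≤ N)
    (IΔ : Ideal (MvPowerSeries (Fin 4) ℂ))
    (hIΔ : IΔ = Ideal.span {X 0 - X 2, X 0 ^ α * X 1 ^ β - X 2 ^ α * X 3 ^ β,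
      X 1 ^ N - X 3 ^ N}) :
    ∀ a b : ℕ, 0 < a → a < α → ¬ N ∣ b →
      ¬ IsIntegralOverIdeal IΔ (X 0 ^ a * X 1 ^ b - X 2 ^ a * X 3 ^ b) := by
  intro a b _ haα hNb hint
  obtain ⟨θ, hθ⟩ : ∃ θ : ℂ, IsPrimitiveRoot θ N := ⟨_, Complex.isPrimitiveRoot_exp N (by omega)⟩
  have hθb : PowerSeries.constantCoeff (PowerSeries.C (1 - θ ^ b)) ≠ 0 := by
    rwa [PowerSeries.constantCoeff_C, sub_ne_zero, ne_comm, Ne, hθ.pow_eq_one_iff_dvd]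
  have hint' := (hint.map (twistedArc θ b).toRingHom).mono <|
    hIΔ ▸ map_twistedArc_span_le θ b haα hθ.pow_eq_one
  rw [AlgHom.toRingHom_eq_coe, RingHom.coe_coe, twistedArc_binomial] at hint'
  exact not_isIntegralOverIdeal_X_pow_mul _ hθb hint'

open MvPowerSeries in
/-- In `ℂ[[x_1,x_2,y_1,y_2]]` (variables `x_1 = X 0`, `x_2 = X 1`, `y_1 = X 2`, `y_2 = X 3`)
with `I_Δ = ⟨x_1 - y_1, x_1^α x_2^β - y_1^α y_2^β, x_2^N - y_2^N⟩`, `gcd(β,N) = 1`: for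
`0 < a < α` and `N ∤ b` the element `x_1^a x_2^b - y_1^a y_2^b` is not integral over `I_Δ`. -/
theorem mixed_power_not_integral (α β N : ℕ)
    (hα : 2 ≤ α) (hβ : 1 ≤ β) (hN : 2 ≤ N) (hgcd : Nat.gcd β N = 1)
    (IΔ : Ideal (MvPowerSeries (Fin 4) ℂ))
    (hIΔ : IΔ = Ideal.span {X 0 - X 2, X 0 ^ α * X 1 ^ β - X 2 ^ α * X 3 ^ β,
      X 1 ^ N - X 3 ^ N}) :
    ∀ a b : ℕ, 0 < a → a < α → ¬ N ∣ b →
      ¬ IsIntegralOverIdeal IΔ (X 0 ^ a * X 1 ^ b - X 2 ^ a * X 3 ^ b) :=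
  mixed_power_not_integral_general α β N hN IΔ hIΔ
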